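/- arXiv:math/0406098 — 5 statements merged into one kernel-verified Lean document; each statement's English description precedes it below -/
import Mathlib

section
/- Let r > 0 and let p₀, p₁, …, p₆ be seven points of the Euclidean plane all lying in the closed ball of radius r about a common center, such that the distance between any two distinct points is at least s. Then s ≤ r. (Equivalently: seven nonoverlapping disks of diameter d fitting in a circle of diameter D force D ≥ 3d, so the 7-disk curved hexagonal packing with D/d = 3 is optimal.) -/
open EuclideanSpace

open Complex Real in
/-- If two complex numbers have arguments within `π/3`, then their distance is at most
the larger of their absolute values. -/
lemma abs_sub_le_max_of_arg_close (v w : ℂ) (h : |arg v - arg w| ≤ π / 3) :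
    ‖v - w‖ ≤ max (‖v‖) (‖w‖) := by
  set a := ‖v‖ with ha
  set b := ‖w‖ with hb
  have ha0 : 0 ≤ a := norm_nonneg v
  have hb0 : 0 ≤ b := norm_nonneg w
  have hv := Complex.norm_mul_cos_add_sin_mul_I v
  have hw := Complex.norm_mul_cos_add_sin_mul_I w
  have hcos : (1 : ℝ) / 2 ≤ Real.cos (arg v - arg w) := by
    rw [← Real.cos_abs]
    have h1 : Real.cos (π / 3) ≤ Real.cos |arg v - arg w| := by
      apply Real.cos_le_cos_of_nonneg_of_le_pi (abs_nonneg _) _ h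
      linarith [Real.pi_pos]
    rwa [Real.cos_pi_div_three] at h1
  have hvre : v.re = a * Real.cos (arg v) := by
    conv_lhs => rw [← hv]
    simp only [Complex.mul_re, Complex.mul_im, Complex.add_re, Complex.add_im, Complex.I_re,
      Complex.I_im, Complex.ofReal_re, Complex.ofReal_im, Complex.cos_ofReal_re,
      Complex.sin_ofReal_re, Complex.cos_ofReal_im, Complex.sin_ofReal_im]
    ring
  have hvim : v.im = a * Real.sin (arg v) := by
    conv_lhs => rw [← hv]
    simp only [Complex.mul_re, Complex.mul_im, Complex.add_re, Complex.add_im, Complex.I_re,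
      Complex.I_im, Complex.ofReal_re, Complex.ofReal_im, Complex.cos_ofReal_re,
      Complex.sin_ofReal_re, Complex.cos_ofReal_im, Complex.sin_ofReal_im]
    ring
  have hwre : w.re = b * Real.cos (arg w) := by
    conv_lhs => rw [← hw]
    simp only [Complex.mul_re, Complex.mul_im, Complex.add_re, Complex.add_im, Complex.I_re,
      Complex.I_im, Complex.ofReal_re, Complex.ofReal_im, Complex.cos_ofReal_re,
      Complex.sin_ofReal_re, Complex.cos_ofReal_im, Complex.sin_ofReal_im]
    ring
  have hwim : w.im = b * Real.sin (arg w) := by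
    conv_lhs => rw [← hw]
    simp only [Complex.mul_re, Complex.mul_im, Complex.add_re, Complex.add_im, Complex.I_re,
      Complex.I_im, Complex.ofReal_re, Complex.ofReal_im, Complex.cos_ofReal_re,
      Complex.sin_ofReal_re, Complex.cos_ofReal_im, Complex.sin_ofReal_im]
    ring
  have hre : (v - w).re = a * Real.cos (arg v) - b * Real.cos (arg w) := by
    rw [Complex.sub_re, hvre, hwre]
  have him : (v - w).im = a * Real.sin (arg v) - b * Real.sin (arg w) := by
    rw [Complex.sub_im, hvim, hwim]
  have hsq : ‖v - w‖ ^ 2 = a ^ 2 + b ^ 2 -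
      2 * a * b * Real.cos (arg v - arg w) := by
    rw [Complex.sq_norm, Complex.normSq_apply, hre, him, Real.cos_sub]
    have h1 := Real.sin_sq_add_cos_sq (arg v)
    have h2 := Real.sin_sq_add_cos_sq (arg w)
    nlinarith [h1, h2]
  have hM : ‖v - w‖ ^ 2 ≤ max a b ^ 2 := by
    rcases le_total a b with hab | hab
    · have : max a b = b := max_eq_right hab
      rw [this, hsq]
      nlinarith [hcos, mul_nonneg ha0 hb0, mul_le_mul_of_nonneg_left hab ha0]
    · have : max a b = a := max_eq_left hab
      rw [this, hsq]
      nlinarith [hcos, mul_nonneg ha0 hb0, mul_le_mul_of_nonneg_left hab hb0]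
  have habs0 : 0 ≤ ‖v - w‖ := norm_nonneg _
  have hM0 : 0 ≤ max a b := le_max_of_le_left ha0
  nlinarith [hM, habs0, hM0]

/-- Sector membership: clamped floor gives an interval of length one containing `x`. -/
lemma sector_bounds (x : ℝ) (h0 : 0 ≤ x) (h6 : x ≤ 6) :
    ((min 5 (⌊x⌋).toNat : ℕ) : ℝ) ≤ x ∧ x ≤ ((min 5 (⌊x⌋).toNat : ℕ) : ℝ) + 1 := by
  have hfl : (⌊x⌋ : ℝ) ≤ x := Int.floor_le x
  have hfl' : x < ⌊x⌋ + 1 := Int.lt_floor_add_one x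
  have hnn : 0 ≤ ⌊x⌋ := Int.floor_nonneg.mpr h0
  have htn : ((⌊x⌋).toNat : ℤ) = ⌊x⌋ := Int.toNat_of_nonneg hnn
  rcases le_or_gt ⌊x⌋ 5 with h5 | h5
  · have : min 5 (⌊x⌋).toNat = (⌊x⌋).toNat := by omega
    rw [this]
    have hc : ((⌊x⌋.toNat : ℕ) : ℝ) = (⌊x⌋ : ℝ) := by exact_mod_cast congrArg Int.cast htn
    rw [hc]
    exact ⟨hfl, by linarith⟩
  · have h6' : (6 : ℝ) ≤ (⌊x⌋ : ℝ) := by exact_mod_cast h5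
    have hx6 : x = 6 := le_antisymm h6 (le_trans h6' hfl)
    have : min 5 (⌊x⌋).toNat = 5 := by omega
    rw [this, hx6]; norm_num

open Complex Real in
theorem seven_points_in_ball (r s : ℝ) (hr : 0 < r)
    (c : EuclideanSpace ℝ (Fin 2)) (p : Fin 7 → EuclideanSpace ℝ (Fin 2))
    (hball : ∀ i, dist (p i) c ≤ r)
    (hsep : ∀ i j, i ≠ j → s ≤ dist (p i) (p j)) :
    s ≤ r := by
  set v : Fin 7 → ℂ := fun i => ⟨p i 0 - c 0, p i 1 - c 1⟩ with hvdef
  have habs : ∀ i, ‖v i‖ = dist (p i) c := by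
    intro i
    rw [EuclideanSpace.dist_eq, Complex.norm_def, Complex.normSq_apply]
    simp only [Fin.sum_univ_two, Real.dist_eq, _root_.sq_abs, hvdef]
    congr 1
    ring
  have habs2 : ∀ i j, ‖v i - v j‖ = dist (p i) (p j) := by
    intro i j
    rw [EuclideanSpace.dist_eq, Complex.norm_def, Complex.normSq_apply]
    simp only [Fin.sum_univ_two, Real.dist_eq, _root_.sq_abs, hvdef, Complex.sub_re, Complex.sub_im]
    congr 1
    ring
  -- pigeonhole on sectors
  have hπ := Real.pi_pos
  set t : Fin 7 → ℝ := fun i => (arg (v i) + π) * 3 / π with htdef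
  have ht0 : ∀ i, 0 ≤ t i := by
    intro i
    have := Complex.neg_pi_lt_arg (v i)
    have h3 : (0:ℝ) < 3 / π := by positivity
    simp only [htdef]
    have : 0 ≤ arg (v i) + π := by linarith
    positivity
  have ht6 : ∀ i, t i ≤ 6 := by
    intro i
    have := Complex.arg_le_pi (v i)
    simp only [htdef]
    rw [div_le_iff₀ hπ]
    nlinarith
  set f : Fin 7 → Fin 6 := fun i =>
    ⟨min 5 (⌊t i⌋).toNat, Nat.lt_succ_of_le (Nat.min_le_left 5 _)⟩ with hfdef
  obtain ⟨i, j, hij, hfij⟩ := Fintype.exists_ne_map_eq_of_card_lt f (by norm_num)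
  have hbi := sector_bounds (t i) (ht0 i) (ht6 i)
  have hbj := sector_bounds (t j) (ht0 j) (ht6 j)
  have hk : ((min 5 (⌊t i⌋).toNat : ℕ) : ℝ) = ((min 5 (⌊t j⌋).toNat : ℕ) : ℝ) :=
    congrArg (fun n : ℕ => (n : ℝ)) (congrArg Fin.val hfij)
  have htclose : |t i - t j| ≤ 1 := by
    rw [abs_le]; constructor <;> [linarith [hbi.1, hbi.2, hbj.1, hbj.2]; linarith [hbi.1, hbi.2, hbj.1, hbj.2]]
  have hargclose : |arg (v i) - arg (v j)| ≤ π / 3 := by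
    have heq : arg (v i) - arg (v j) = (t i - t j) * (π / 3) := by
      simp only [htdef]
      field_simp
      ring
    rw [heq, abs_mul, abs_of_pos (by positivity : (0:ℝ) < π / 3)]
    calc |t i - t j| * (π / 3) ≤ 1 * (π / 3) := by
          apply mul_le_mul_of_nonneg_right htclose (by positivity)
      _ = π / 3 := by ring
  have hkey := abs_sub_le_max_of_arg_close (v i) (v j) hargclose
  rw [habs2, habs, habs] at hkey
  calc s ≤ dist (p i) (p j) := hsep i j hij
    _ ≤ max (dist (p i) c) (dist (p j) c) := hkey
    _ ≤ r := max_le (hball i) (hball j)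
end

section
/- Let ρ > 0 and R > 0, and suppose seven closed disks of radius ρ in the Euclidean plane have pairwise disjoint interiors and are all contained in a closed disk of radius R. Then R ≥ 3ρ; consequently, the fraction of the area of the containing disk covered by the seven disks is at most 7ρ²/R² ≤ 7/9. -/
open Metric

open Complex Real


lemma re_mul_conj_eq (a b : ℂ) : (a * (starRingEnd ℂ) b).re =
    ‖a‖ * ‖b‖ * Real.cos (a.arg - b.arg) := by
  nth_rewrite 1 [← Complex.norm_mul_exp_arg_mul_I a, ← Complex.norm_mul_exp_arg_mul_I b]
  rw [map_mul, ← Complex.exp_conj]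
  simp only [map_mul, Complex.conj_ofReal, Complex.conj_I, mul_neg]
  rw [show ((‖a‖ : ℂ) * Complex.exp (a.arg * I)) *
      ((‖b‖ : ℂ) * Complex.exp (-(b.arg * I))) =
      ((‖a‖ * ‖b‖ : ℝ) : ℂ) *
      Complex.exp (((a.arg - b.arg : ℝ) : ℂ) * I) by
    push_cast; rw [mul_comm (↑(‖b‖)) (Complex.exp _), mul_assoc, mul_assoc, ← mul_assoc (Complex.exp _), ← Complex.exp_add]; ring_nf]
  rw [Complex.re_ofReal_mul, Complex.exp_ofReal_mul_I_re]

lemma abs_sub_le_max_of_arg_close_s9 (a b : ℂ) (h : |a.arg - b.arg| ≤ π / 3) :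
    ‖(a - b)‖ ≤ max (‖a‖) (‖b‖) := by
  set A := ‖a‖ with hA
  set B := ‖b‖ with hB
  have hcos : (1:ℝ)/2 ≤ Real.cos (a.arg - b.arg) := by
    rw [← Real.cos_pi_div_three, ← Real.cos_abs (a.arg - b.arg)]
    exact Real.cos_le_cos_of_nonneg_of_le_pi (abs_nonneg _) (by linarith [Real.pi_pos]) h
  have hsq : ‖(a - b)‖ ^ 2 ≤ (max A B) ^ 2 := by
    have h1 : ‖(a - b)‖ ^ 2 = A ^ 2 + B ^ 2 - 2 * (A * B * Real.cos (a.arg - b.arg)) := by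
      rw [Complex.sq_norm (a-b), Complex.normSq_sub, re_mul_conj_eq, ← Complex.sq_norm a,
        ← Complex.sq_norm b, ← hA, ← hB]
    have hAB : 0 ≤ A * B := mul_nonneg (norm_nonneg a) (norm_nonneg b)
    have h2 : ‖(a - b)‖ ^ 2 ≤ A ^ 2 + B ^ 2 - A * B := by
      rw [h1]; nlinarith
    rcases le_total A B with hle | hle
    · rw [max_eq_right hle]; nlinarith [norm_nonneg a]
    · rw [max_eq_left hle]; nlinarith [norm_nonneg b]
  have h0 : (0:ℝ) ≤ max A B := le_max_of_le_left (norm_nonneg a)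
  nlinarith [norm_nonneg (a - b)]

lemma seven_points_bound (r d : ℝ) (z : Fin 7 → ℂ)
    (hz : ∀ i, ‖(z i)‖ ≤ r)
    (hsep : ∀ i j, i ≠ j → d ≤ ‖(z i - z j)‖) : d ≤ r := by
  by_contra hcon
  push_neg at hcon
  have hπ := Real.pi_pos
  set t : Fin 7 → ℝ := fun i => ((z i).arg + π) / (π / 3) with ht
  have htmem : ∀ i, 0 ≤ t i ∧ t i ≤ 6 := by
    intro i
    have h1 := Complex.neg_pi_lt_arg (z i)
    have h2 := Complex.arg_le_pi (z i)
    constructor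
    · exact div_nonneg (by linarith) (by positivity)
    · rw [div_le_iff₀ (by positivity)]; linarith
  set f : Fin 7 → Fin 6 := fun i => ⟨min 5 ⌊t i⌋₊, by
    have := min_le_left 5 ⌊t i⌋₊; omega⟩ with hf
  obtain ⟨i, j, hij, hfeq⟩ := Fintype.exists_ne_map_eq_of_card_lt f (by simp)
  have key : ∀ k, ((f k : ℕ) : ℝ) ≤ t k ∧ t k ≤ ((f k : ℕ) : ℝ) + 1 := by
    intro k
    have hfl : (⌊t k⌋₊ : ℝ) ≤ t k := Nat.floor_le (htmem k).1
    have hfu : t k < ⌊t k⌋₊ + 1 := Nat.lt_floor_add_one _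
    rcases le_or_gt (⌊t k⌋₊) 5 with h5 | h5
    · have hv : (f k : ℕ) = ⌊t k⌋₊ := min_eq_right h5
      rw [hv]
      exact ⟨hfl, hfu.le⟩
    · have hv : (f k : ℕ) = 5 := min_eq_left (by omega)
      have h6 : (6 : ℝ) ≤ (⌊t k⌋₊ : ℝ) := by exact_mod_cast Nat.cast_le.mpr (by omega : (6:ℕ) ≤ ⌊t k⌋₊)
      rw [hv]
      refine ⟨?_, ?_⟩
      · push_cast; linarith [(htmem k).2]
      · push_cast; linarith [(htmem k).2]
  have htij : |t i - t j| ≤ 1 := by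
    obtain ⟨h1, h2⟩ := key i
    obtain ⟨h3, h4⟩ := key j
    rw [hfeq] at h1 h2
    rw [abs_le]
    constructor <;> linarith
  have hargs : |(z i).arg - (z j).arg| ≤ π / 3 := by
    have hmul : (z i).arg - (z j).arg = (t i - t j) * (π / 3) := by
      rw [ht]
      field_simp
      ring
    rw [hmul, abs_mul, abs_of_pos (by positivity : (0:ℝ) < π / 3)]
    nlinarith
  have h1 := abs_sub_le_max_of_arg_close_s9 (z i) (z j) hargs
  have h2 := hsep i j hij
  have h3 := hz i
  have h4 := hz j
  rcases max_cases (‖(z i)‖) (‖(z j)‖) with ⟨he, _⟩ | ⟨he, _⟩ <;>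
    rw [he] at h1 <;> linarith

lemma dist_add_le_of_closedBall_subset {ρ R : ℝ} (hρ : 0 < ρ)
    (c O : EuclideanSpace ℝ (Fin 2)) (h : closedBall c ρ ⊆ closedBall O R) :
    dist c O + ρ ≤ R := by
  by_cases hc : c = O
  · subst hc
    have hx : c + ρ • EuclideanSpace.single 0 (1:ℝ) ∈ closedBall c ρ := by
      rw [mem_closedBall, dist_eq_norm]
      simp [norm_smul, EuclideanSpace.norm_single, abs_of_pos hρ]
    have := h hx
    rw [mem_closedBall, dist_eq_norm] at this
    simp only [add_sub_cancel_left] at this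
    rw [norm_smul, EuclideanSpace.norm_single] at this
    simp [abs_of_pos hρ] at this
    simpa using by linarith
  · set d := c - O with hd
    have hdne : d ≠ 0 := sub_ne_zero.mpr hc
    have hdn : 0 < ‖d‖ := norm_pos_iff.mpr hdne
    set x := c + (ρ / ‖d‖) • d with hx
    have hx1 : x ∈ closedBall c ρ := by
      rw [mem_closedBall, dist_eq_norm, hx]
      simp only [add_sub_cancel_left]
      rw [norm_smul]
      rw [Real.norm_of_nonneg (by positivity), div_mul_cancel₀ _ hdn.ne']
    have hx2 := h hx1
    rw [mem_closedBall, dist_eq_norm] at hx2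
    have hxO : x - O = (1 + ρ / ‖d‖) • d := by
      rw [hx, hd]; module
    rw [hxO, norm_smul, Real.norm_of_nonneg (by positivity)] at hx2
    have : ‖d‖ + ρ ≤ R := by
      have : (1 + ρ / ‖d‖) * ‖d‖ = ‖d‖ + ρ := by field_simp
      linarith [this ▸ hx2]
    rw [dist_eq_norm]
    exact this

theorem seven_disks_in_disk (ρ R : ℝ) (hρ : 0 < ρ) (hR : 0 < R)
    (O : EuclideanSpace ℝ (Fin 2)) (c : Fin 7 → EuclideanSpace ℝ (Fin 2))
    (hdisj : ∀ i j, i ≠ j →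
      Disjoint (interior (closedBall (c i) ρ)) (interior (closedBall (c j) ρ)))
    (hsub : ∀ i, closedBall (c i) ρ ⊆ closedBall O R) :
    3 * ρ ≤ R ∧ 7 * ρ ^ 2 / R ^ 2 ≤ 7 / 9 := by
  set e : ℂ ≃ₗᵢ[ℝ] EuclideanSpace ℝ (Fin 2) :=
    Complex.isometryOfOrthonormal (EuclideanSpace.basisFun (Fin 2) ℝ) with he
  set z : Fin 7 → ℂ := fun i => e.symm (c i) - e.symm O with hz
  have habs : ∀ i, ‖(z i)‖ = dist (c i) O := by
    intro i
    rw [hz]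
    simp only [← dist_eq_norm]
    exact e.symm.dist_map _ _
  have habs2 : ∀ i j, ‖(z i - z j)‖ = dist (c i) (c j) := by
    intro i j
    rw [hz]
    rw [show (e.symm (c i) - e.symm O) - (e.symm (c j) - e.symm O)
        = e.symm (c i) - e.symm (c j) by ring, ← dist_eq_norm, e.symm.dist_map]
  have hsep : ∀ i j, i ≠ j → 2 * ρ ≤ ‖(z i - z j)‖ := by
    intro i j hij
    rw [habs2]
    have := hdisj i j hij
    rw [interior_closedBall _ hρ.ne', interior_closedBall _ hρ.ne',
      disjoint_ball_ball_iff hρ hρ] at this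
    linarith
  have hz2 : ∀ i, ‖(z i)‖ ≤ R - ρ := by
    intro i
    rw [habs]
    linarith [dist_add_le_of_closedBall_subset hρ (c i) O (hsub i)]
  have hmain : 2 * ρ ≤ R - ρ := seven_points_bound (R - ρ) (2 * ρ) z hz2 hsep
  refine ⟨by linarith, ?_⟩
  rw [div_le_div_iff₀ (by positivity) (by norm_num)]
  nlinarith
end

section
/- Let S be a set of seven points in the closed unit disk of the plane (identified with ℂ, centered at 0) such that any two distinct points of S are at distance at least 1. Then there is a real number θ such that S = {0} ∪ { e^{i(θ + jπ/3)} : j = 0, 1, …, 5 }; that is, the optimal configuration of 7 points consists of the center together with the six vertices of a regular hexagon of circumradius 1, and is unique up to a rotation about the center. -/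
open Real Complex

private lemma distsq (z w : ℂ) : dist z w ^ 2 = (z.re - w.re)^2 + (z.im - w.im)^2 := by
  rw [Complex.dist_eq, Complex.sq_norm, Complex.normSq_apply, Complex.sub_re, Complex.sub_im]
  ring

private lemma pi3_le {δ : ℝ} (h0 : 0 ≤ δ) (hc : Real.cos δ ≤ 1/2) : π/3 ≤ δ := by
  by_contra h
  push_neg at h
  have := Real.cos_lt_cos_of_nonneg_of_le_pi h0 (by linarith [Real.pi_pos]) h
  rw [Real.cos_pi_div_three] at this; linarith

private lemma floor_bounds {a : ℝ} (ha : 0 ≤ a) {n : ℕ} (h : ⌊a*3/π⌋₊ = n) :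
    (n:ℝ)*π ≤ a*3 ∧ a*3 < ((n:ℝ)+1)*π := by
  have hπ := Real.pi_pos
  have h1 := Nat.floor_le (show (0:ℝ) ≤ a*3/π by positivity)
  have h2 := Nat.lt_floor_add_one (a*3/π)
  rw [h] at h1 h2
  constructor
  · exact (le_div_iff₀ hπ).mp h1
  · have := (div_lt_iff₀ hπ).mp h2
    push_cast at this ⊢; linarith

private lemma floor_close {a b : ℝ} (ha : 0 ≤ a) (hb : 0 ≤ b)
    (h : ⌊a*3/π⌋₊ = ⌊b*3/π⌋₊) : |a - b| < π/3 := by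
  obtain ⟨h1, h2⟩ := floor_bounds ha h
  obtain ⟨h3, h4⟩ := floor_bounds hb rfl
  rw [abs_lt]; constructor <;> linarith

private lemma close_lt_one {z w : ℂ} (hz : z ≠ 0) (hw : w ≠ 0)
    (hz1 : ‖z‖ ≤ 1) (hw1 : ‖w‖ ≤ 1)
    (hang : |z.arg - w.arg| < π/3) : dist z w < 1 := by
  have hr : 0 < ‖z‖ := norm_pos_iff.mpr hz
  have hs : 0 < ‖w‖ := norm_pos_iff.mpr hw
  have hzre : z.re = ‖z‖ * Real.cos z.arg := by
    rw [Complex.cos_arg hz]; field_simp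
  have hzim : z.im = ‖z‖ * Real.sin z.arg := by
    rw [Complex.sin_arg]; field_simp
  have hwre : w.re = ‖w‖ * Real.cos w.arg := by
    rw [Complex.cos_arg hw]; field_simp
  have hwim : w.im = ‖w‖ * Real.sin w.arg := by
    rw [Complex.sin_arg]; field_simp
  have hcos : 1/2 < Real.cos (z.arg - w.arg) := by
    have := Real.cos_lt_cos_of_nonneg_of_le_pi (abs_nonneg (z.arg - w.arg))
      (by linarith [Real.pi_pos]) hang
    rw [Real.cos_pi_div_three, Real.cos_abs] at this; linarith
  have key : dist z w ^ 2 = (‖z‖)^2 + (‖w‖)^2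
      - 2 * ‖z‖ * ‖w‖ * Real.cos (z.arg - w.arg) := by
    rw [distsq, hzre, hzim, hwre, hwim, Real.cos_sub]
    linear_combination (‖z‖)^2 * Real.sin_sq_add_cos_sq z.arg
      + (‖w‖)^2 * Real.sin_sq_add_cos_sq w.arg
  have h2 : dist z w ^ 2 < 1 := by
    nlinarith [mul_pos hr hs, mul_nonneg (sub_nonneg.2 hz1) (sub_nonneg.2 hw1),
      mul_nonneg hr.le (sub_nonneg.2 hz1), mul_nonneg hs.le (sub_nonneg.2 hw1)]
  nlinarith [dist_nonneg (x := z) (y := w)]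

private lemma exp_dist_cos {x y : ℝ} (h : 1 ≤ dist (Complex.exp (x*Complex.I)) (Complex.exp (y*Complex.I))) :
    Real.cos (x - y) ≤ 1/2 := by
  have key : dist (Complex.exp (x*Complex.I)) (Complex.exp (y*Complex.I)) ^ 2
      = 2 - 2 * Real.cos (x - y) := by
    rw [distsq, Complex.exp_ofReal_mul_I_re, Complex.exp_ofReal_mul_I_re,
      Complex.exp_ofReal_mul_I_im, Complex.exp_ofReal_mul_I_im, Real.cos_sub]
    linear_combination Real.sin_sq_add_cos_sq x + Real.sin_sq_add_cos_sq y
  nlinarith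

private lemma seven_aux (S : Set ℂ)
    (hcard : S.ncard = 7)
    (hball : ∀ z ∈ S, ‖z‖ ≤ 1)
    (hsep : ∀ z ∈ S, ∀ w ∈ S, z ≠ w → 1 ≤ dist z w)
    (h0S : (0:ℂ) ∈ S) :
    ∃ θ : ℝ, S = insert (0 : ℂ)
      (Set.range fun j : Fin 6 =>
        Complex.exp (((θ : ℂ) + (j : ℂ) * Real.pi / 3) * Complex.I)) := by
  have hπ := Real.pi_pos
  have hfin : S.Finite := Set.finite_of_ncard_ne_zero (by omega)
  set T : Set ℂ := S \ {0} with hT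
  have hTfin : T.Finite := hfin.subset Set.diff_subset
  have hT6 : T.ncard = 6 := by
    rw [hT, Set.ncard_diff_singleton_of_mem h0S, hcard]
  have habs1 : ∀ w ∈ T, ‖w‖ = 1 := by
    intro w hw
    have h1 := hsep w hw.1 0 h0S hw.2
    rw [Complex.dist_eq, sub_zero] at h1
    exact le_antisymm (hball w hw.1) h1
  obtain ⟨z₀, hz₀T⟩ := Set.nonempty_of_ncard_ne_zero (s := T) (by omega)
  set θ := z₀.arg with hθ
  set β : ℂ → ℝ := fun w => if θ ≤ w.arg then w.arg - θ else w.arg - θ + 2*π with hβ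
  have hβrange : ∀ w, 0 ≤ β w ∧ β w < 2*π := by
    intro w
    have h1 := Complex.neg_pi_lt_arg w
    have h2 := Complex.arg_le_pi w
    have h3 := Complex.neg_pi_lt_arg z₀
    have h4 := Complex.arg_le_pi z₀
    rw [hβ]; dsimp only; split_ifs with h <;> constructor <;> linarith
  have hβz₀ : β z₀ = 0 := by rw [hβ]; simp [hθ]
  have hrep : ∀ w ∈ T, w = Complex.exp (((θ + β w : ℝ) : ℂ) * Complex.I) := by
    intro w hw
    have hw1 : Complex.exp ((w.arg : ℂ) * Complex.I) = w := by
      have := Complex.norm_mul_exp_arg_mul_I w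
      rwa [habs1 w hw, Complex.ofReal_one, one_mul] at this
    rw [hβ]; dsimp only; split_ifs with h
    · rw [show ((θ + (w.arg - θ) : ℝ) : ℂ) = (w.arg : ℂ) by push_cast; ring, hw1]
    · rw [show ((θ + (w.arg - θ + 2*π) : ℝ) : ℂ) = (w.arg : ℂ) + 2*(π:ℂ) by push_cast; ring,
        add_mul, Complex.exp_add, Complex.exp_two_pi_mul_I, mul_one, hw1]
  have hcond : ∀ w ∈ T, ∀ v ∈ T, w ≠ v → Real.cos (β w - β v) ≤ 1/2 := by
    intro w hw v hv hne
    have h1 := hsep w hw.1 v hv.1 hne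
    rw [hrep w hw, hrep v hv] at h1
    have := exp_dist_cos h1
    rwa [show θ + β w - (θ + β v) = β w - β v by ring] at this
  have hinj : ∀ w ∈ T, ∀ v ∈ T, ⌊β w * 3 / π⌋₊ = ⌊β v * 3/π⌋₊ → w = v := by
    intro w hw v hv hfl
    by_contra hne
    have hc := hcond w hw v hv hne
    have habs := floor_close (hβrange w).1 (hβrange v).1 hfl
    have := Real.cos_lt_cos_of_nonneg_of_le_pi (abs_nonneg (β w - β v))
      (by linarith) habs
    rw [Real.cos_pi_div_three, Real.cos_abs] at this; linarith
  -- sector map is onto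
  have hlt6 : ∀ w : ℂ, ⌊β w * 3 / π⌋₊ < 6 := by
    intro w
    rw [Nat.floor_lt (div_nonneg (by nlinarith [(hβrange w).1]) hπ.le), div_lt_iff₀ hπ]
    push_cast; nlinarith [(hβrange w).2]
  set σ : ℂ → Fin 6 := fun w => ⟨⌊β w * 3 / π⌋₊, hlt6 w⟩ with hσ
  have hsurj : ∀ j : Fin 6, ∃ w ∈ T, σ w = j := by
    have hcards : (Finset.image σ hTfin.toFinset).card = 6 := by
      rw [Finset.card_image_of_injOn, ← Set.ncard_eq_toFinset_card T hTfin, hT6]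
      intro w hw v hv he
      simp only [Finset.mem_coe, Set.Finite.mem_toFinset] at hw hv
      exact hinj w hw v hv (congrArg Fin.val he)
    have huniv : Finset.image σ hTfin.toFinset = Finset.univ :=
      Finset.eq_univ_of_card _ (by rw [hcards]; simp)
    intro j
    have : j ∈ Finset.image σ hTfin.toFinset := huniv ▸ Finset.mem_univ j
    obtain ⟨w, hw, hwj⟩ := Finset.mem_image.mp this
    exact ⟨w, (Set.Finite.mem_toFinset hTfin).mp hw, hwj⟩
  obtain ⟨p1, hp1T, hs1⟩ := hsurj 1
  obtain ⟨p2, hp2T, hs2⟩ := hsurj 2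
  obtain ⟨p3, hp3T, hs3⟩ := hsurj 3
  obtain ⟨p4, hp4T, hs4⟩ := hsurj 4
  obtain ⟨p5, hp5T, hs5⟩ := hsurj 5
  have hf0 : ⌊β z₀ * 3 / π⌋₊ = 0 := by rw [hβz₀]; simp
  have hf1 : ⌊β p1 * 3 / π⌋₊ = 1 := by simpa [hσ] using congrArg Fin.val hs1
  have hf2 : ⌊β p2 * 3 / π⌋₊ = 2 := by simpa [hσ] using congrArg Fin.val hs2
  have hf3 : ⌊β p3 * 3 / π⌋₊ = 3 := by simpa [hσ] using congrArg Fin.val hs3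
  have hf4 : ⌊β p4 * 3 / π⌋₊ = 4 := by simpa [hσ] using congrArg Fin.val hs4
  have hf5 : ⌊β p5 * 3 / π⌋₊ = 5 := by simpa [hσ] using congrArg Fin.val hs5
  obtain ⟨hl1, hu1⟩ := floor_bounds (hβrange p1).1 hf1
  obtain ⟨hl2, hu2⟩ := floor_bounds (hβrange p2).1 hf2
  obtain ⟨hl3, hu3⟩ := floor_bounds (hβrange p3).1 hf3
  obtain ⟨hl4, hu4⟩ := floor_bounds (hβrange p4).1 hf4
  obtain ⟨hl5, hu5⟩ := floor_bounds (hβrange p5).1 hf5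
  push_cast at hl1 hu1 hl2 hu2 hl3 hu3 hl4 hu4 hl5 hu5
  have hne01 : p1 ≠ z₀ := fun h => by rw [h, hf0] at hf1; omega
  have hne12 : p2 ≠ p1 := fun h => by rw [h, hf1] at hf2; omega
  have hne23 : p3 ≠ p2 := fun h => by rw [h, hf2] at hf3; omega
  have hne34 : p4 ≠ p3 := fun h => by rw [h, hf3] at hf4; omega
  have hne45 : p5 ≠ p4 := fun h => by rw [h, hf4] at hf5; omega
  have hne50 : p5 ≠ z₀ := fun h => by rw [h, hf0] at hf5; omega
  have g01 : π/3 ≤ β p1 - β z₀ :=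
    pi3_le (by linarith) (hcond p1 hp1T z₀ hz₀T hne01)
  have g12 : π/3 ≤ β p2 - β p1 :=
    pi3_le (by linarith) (hcond p2 hp2T p1 hp1T hne12)
  have g23 : π/3 ≤ β p3 - β p2 :=
    pi3_le (by linarith) (hcond p3 hp3T p2 hp2T hne23)
  have g34 : π/3 ≤ β p4 - β p3 :=
    pi3_le (by linarith) (hcond p4 hp4T p3 hp3T hne34)
  have g45 : π/3 ≤ β p5 - β p4 :=
    pi3_le (by linarith) (hcond p5 hp5T p4 hp4T hne45)
  have gwrap : π/3 ≤ 2*π - β p5 := by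
    apply pi3_le (by linarith [(hβrange p5).2])
    have hc := hcond p5 hp5T z₀ hz₀T hne50
    rw [hβz₀, sub_zero] at hc
    rwa [show 2*π - β p5 = -(β p5 - 2*π) by ring, Real.cos_neg, Real.cos_sub_two_pi]
  have e0 : β z₀ = 0*π/3 := by rw [hβz₀]; ring
  have e1 : β p1 = 1*π/3 := by linarith
  have e2 : β p2 = 2*π/3 := by linarith
  have e3 : β p3 = 3*π/3 := by linarith
  have e4 : β p4 = 4*π/3 := by linarith
  have e5 : β p5 = 5*π/3 := by linarith
  have key : ∀ (j : ℕ) (p : ℂ), p ∈ T → β p = (j:ℝ)*π/3 →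
      Complex.exp (((θ:ℂ) + (j:ℕ) * (π:ℂ)/3) * Complex.I) = p := by
    intro j p hp hb
    rw [hrep p hp, hb]
    congr 1
    push_cast
    ring
  have k0 := key 0 z₀ hz₀T (by push_cast; exact e0)
  have k1 := key 1 p1 hp1T (by push_cast; exact e1)
  have k2 := key 2 p2 hp2T (by push_cast; exact e2)
  have k3 := key 3 p3 hp3T (by push_cast; exact e3)
  have k4 := key 4 p4 hp4T (by push_cast; exact e4)
  have k5 := key 5 p5 hp5T (by push_cast; exact e5)
  refine ⟨θ, ?_⟩
  have hmem : ∀ x ∈ T, x = z₀ ∨ x = p1 ∨ x = p2 ∨ x = p3 ∨ x = p4 ∨ x = p5 := by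
    intro x hx
    have h6 := hlt6 x
    generalize hk : ⌊β x * 3 / π⌋₊ = k at h6
    interval_cases k
    · exact Or.inl (hinj x hx z₀ hz₀T (hk.trans hf0.symm))
    · exact Or.inr (Or.inl (hinj x hx p1 hp1T (hk.trans hf1.symm)))
    · exact Or.inr (Or.inr (Or.inl (hinj x hx p2 hp2T (hk.trans hf2.symm))))
    · exact Or.inr (Or.inr (Or.inr (Or.inl (hinj x hx p3 hp3T (hk.trans hf3.symm)))))
    · exact Or.inr (Or.inr (Or.inr (Or.inr (Or.inl (hinj x hx p4 hp4T (hk.trans hf4.symm))))))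
    · exact Or.inr (Or.inr (Or.inr (Or.inr (Or.inr (hinj x hx p5 hp5T (hk.trans hf5.symm))))))
  have hcast : ∀ j : Fin 6, ((j:ℂ)) = ((j:ℕ):ℂ) := fun j => rfl
  ext x
  simp only [Set.mem_insert_iff, Set.mem_range]
  constructor
  · intro hxS
    by_cases hx0 : x = 0
    · exact Or.inl hx0
    · have hxT : x ∈ T := ⟨hxS, hx0⟩
      refine Or.inr ?_
      rcases hmem x hxT with h|h|h|h|h|h
      · exact ⟨0, by rw [h]; exact k0⟩
      · exact ⟨1, by rw [h]; exact k1⟩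
      · exact ⟨2, by rw [h]; exact k2⟩
      · exact ⟨3, by rw [h]; exact k3⟩
      · exact ⟨4, by rw [h]; exact k4⟩
      · exact ⟨5, by rw [h]; exact k5⟩
  · rintro (rfl | ⟨j, rfl⟩)
    · exact h0S
    · fin_cases j
      · exact (k0 ▸ hz₀T.1 : _)
      · exact (k1 ▸ hp1T.1 : _)
      · exact (k2 ▸ hp2T.1 : _)
      · exact (k3 ▸ hp3T.1 : _)
      · exact (k4 ▸ hp4T.1 : _)
      · exact (k5 ▸ hp5T.1 : _)

theorem seven_points_unit_disk_structure (S : Set ℂ)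
    (hcard : S.ncard = 7)
    (hball : ∀ z ∈ S, ‖z‖ ≤ 1)
    (hsep : ∀ z ∈ S, ∀ w ∈ S, z ≠ w → 1 ≤ dist z w) :
    ∃ θ : ℝ, S = insert (0 : ℂ)
      (Set.range fun j : Fin 6 =>
        Complex.exp (((θ : ℂ) + (j : ℂ) * Real.pi / 3) * Complex.I)) := by
  have h0S : (0:ℂ) ∈ S := by
    have hπ := Real.pi_pos
    have hfin : S.Finite := Set.finite_of_ncard_ne_zero (by omega)
    by_contra h0
    have hlt6 : ∀ z : ℂ, ⌊(π - z.arg)*3/π⌋₊ < 6 := by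
      intro z
      have h1 := Complex.neg_pi_lt_arg z
      have h2 := Complex.arg_le_pi z
      rw [Nat.floor_lt (div_nonneg (by nlinarith) hπ.le)]
      rw [div_lt_iff₀ hπ]; push_cast; nlinarith
    set g : ℂ → Fin 6 := fun z => ⟨⌊(π - z.arg)*3/π⌋₊, hlt6 z⟩ with hg
    obtain ⟨z, hzS, w, hwS, hzw, hgzw⟩ := Finset.exists_ne_map_eq_of_card_lt_of_maps_to
      (s := hfin.toFinset) (t := (Finset.univ : Finset (Fin 6))) (f := g)
      (by rw [← Set.ncard_eq_toFinset_card S hfin, hcard]; simp)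
      (fun x _ => Finset.mem_univ _)
    rw [Set.Finite.mem_toFinset] at hzS hwS
    have hfl : ⌊(π - z.arg)*3/π⌋₊ = ⌊(π - w.arg)*3/π⌋₊ := congrArg Fin.val hgzw
    have hang : |z.arg - w.arg| < π/3 := by
      have := floor_close (a := π - z.arg) (b := π - w.arg)
        (by linarith [Complex.arg_le_pi z]) (by linarith [Complex.arg_le_pi w]) hfl
      rw [abs_lt] at this ⊢; constructor <;> linarith [this.1, this.2]
    have hd := close_lt_one (fun h => h0 (h ▸ hzS)) (fun h => h0 (h ▸ hwS))
      (hball z hzS) (hball w hwS) hang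
    linarith [hsep z hzS w hwS hzw]
  exact seven_aux S hcard hball hsep h0S
end

section
/- There exists an integer K such that for every integer k ≥ K, there is a finite set S of points in the plane with exactly 3k(k+1)+1 elements, pairwise distances at least 1, all contained in a closed ball of some radius r that is strictly smaller than 1/(2·sin(π/(6k))). That is, for all sufficiently large k, the curved hexagonal packing of h(k) = 3k(k+1)+1 equal disks in a circle is not optimal. -/
open Real Metric

namespace CurvedHexAux

open Finset

/-! ## Lattice index machinery -/

def hi (t j : ℤ) : ℤ :=
  if j < -(3*t) then 7*t + j
  else if j < -t then 4*t
  else if j ≤ t then (7*t - j)/2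
  else if j ≤ 3*t then 4*t - j
  else 7*t - 2*j

def lo (t j : ℤ) : ℤ := - hi t (-j)

noncomputable def row (t j : ℤ) : Finset (ℤ × ℤ) :=
  (Finset.Icc (lo t j) (hi t j)).map
    ⟨fun i => (i, j), fun a b h => by simpa using (Prod.mk.injEq _ _ _ _ ▸ h).1⟩

noncomputable def T (t : ℤ) : Finset (ℤ × ℤ) := (Finset.Icc (-(4*t)) (4*t)).biUnion (row t)

theorem mem_T {t : ℤ} {p : ℤ × ℤ} :
    p ∈ T t ↔ (-(4*t) ≤ p.2 ∧ p.2 ≤ 4*t ∧ lo t p.2 ≤ p.1 ∧ p.1 ≤ hi t p.2) := by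
  obtain ⟨i, j⟩ := p
  simp only [T, row, Finset.mem_biUnion, Finset.mem_Icc, Finset.mem_map,
    Function.Embedding.coeFn_mk, Prod.mk.injEq]
  constructor
  · rintro ⟨j', ⟨hj1, hj2⟩, i', hi', rfl, rfl⟩
    exact ⟨hj1, hj2, hi'.1, hi'.2⟩
  · rintro ⟨h1, h2, h3, h4⟩
    exact ⟨j, ⟨h1, h2⟩, i, ⟨h3, h4⟩, rfl⟩

theorem card_row (t j : ℤ) : ((row t j).card : ℤ) = max (hi t j + 1 - lo t j) 0 := by
  simp only [row, Finset.card_map, Int.card_Icc]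
  omega

theorem split_Ioc (a b c : ℤ) (f : ℤ → ℤ) (h1 : a ≤ b) (h2 : b ≤ c) :
    ∑ i ∈ Ioc a c, f i = ∑ i ∈ Ioc a b, f i + ∑ i ∈ Ioc b c, f i := by
  rw [← Finset.sum_union (by
    rw [Finset.disjoint_left]; intro x hx hx'; simp only [mem_Ioc] at *; omega)]
  congr 1
  ext x; simp only [mem_Ioc, mem_union]; omega

theorem sum_Ioc_aux (a : ℤ) (n : ℕ) :
    2 * (∑ j ∈ Ioc a (a + n), j) = (2 * a + n + 1) * n := by
  induction n with
  | zero => simp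
  | succ m ih =>
      have hins : Ioc a (a + (m + 1 : ℕ)) = insert (a + m + 1) (Ioc a (a + m)) := by
        ext x; simp only [mem_Ioc, mem_insert]; push_cast; omega
      rw [hins, Finset.sum_insert (by simp)]
      push_cast
      push_cast at ih
      linear_combination ih

theorem sum_Ioc_id_int (a b : ℤ) (hb : a ≤ b) :
    2 * (∑ j ∈ Ioc a b, j) = (b + a + 1) * (b - a) := by
  obtain ⟨n, rfl⟩ : ∃ n : ℕ, b = a + n := ⟨(b - a).toNat, by omega⟩
  rw [sum_Ioc_aux]; ring

theorem sum_Ioc_linear (c0 c1 a b : ℤ) (h : a ≤ b) :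
    2 * (∑ j ∈ Ioc a b, (c0 + c1 * j)) = (2*c0 + c1*(b+a+1)) * (b - a) := by
  rw [Finset.sum_add_distrib, Finset.sum_const, ← Finset.mul_sum, Int.card_Ioc, nsmul_eq_mul]
  have h2 := sum_Ioc_id_int a b h
  have hbt : ((b-a).toNat : ℤ) = b - a := by omega
  rw [hbt]
  linear_combination c1 * h2

theorem card_T_ge (t : ℤ) (ht : 1 ≤ t) : 45*t^2 + 8*t ≤ ((T t).card : ℤ) := by
  have hdisj : ∀ x ∈ Finset.Icc (-(4*t)) (4*t), ∀ y ∈ Finset.Icc (-(4*t)) (4*t), x ≠ y →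
      Disjoint (row t x) (row t y) := by
    intro x _ y _ hxy
    rw [Finset.disjoint_left]
    intro p hp hp'
    simp only [row, Finset.mem_map, Function.Embedding.coeFn_mk] at hp hp'
    obtain ⟨i1, _, rfl⟩ := hp
    obtain ⟨i2, _, h2⟩ := hp'
    exact hxy ((Prod.mk.injEq _ _ _ _ ▸ h2).2.symm)
  rw [T, Finset.card_biUnion hdisj]
  rw [show Finset.Icc (-(4*t)) (4*t) = Finset.Ioc (-(4*t)-1) (4*t) by ext x; simp only [mem_Icc, mem_Ioc]; omega]
  push_cast
  rw [split_Ioc _ (-(3*t)-1) _ _ (by omega) (by omega),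
      split_Ioc (-(3*t)-1) (-t-1) _ _ (by omega) (by omega),
      split_Ioc (-t-1) t _ _ (by omega) (by omega),
      split_Ioc t (3*t) _ _ (by omega) (by omega)]
  have hL2 : ∑ j ∈ Ioc (-(4*t)-1) (-(3*t)-1), ((14*t+1) + 3*j) ≤
      ∑ j ∈ Ioc (-(4*t)-1) (-(3*t)-1), ((row t j).card : ℤ) := by
    apply Finset.sum_le_sum
    intro j hj
    rw [mem_Ioc] at hj
    rw [card_row]
    simp only [hi, lo]
    split_ifs <;> omega
  have hL1 : ∑ j ∈ Ioc (-(3*t)-1) (-t-1), ((8*t+1) + 1*j) ≤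
      ∑ j ∈ Ioc (-(3*t)-1) (-t-1), ((row t j).card : ℤ) := by
    apply Finset.sum_le_sum
    intro j hj
    rw [mem_Ioc] at hj
    rw [card_row]
    simp only [hi, lo]
    split_ifs <;> omega
  have hM : ∑ j ∈ Ioc (-t-1) t, ((7*t) + 0*j) ≤
      ∑ j ∈ Ioc (-t-1) t, ((row t j).card : ℤ) := by
    apply Finset.sum_le_sum
    intro j hj
    rw [mem_Ioc] at hj
    rw [card_row]
    simp only [hi, lo]
    split_ifs <;> omega
  have hU1 : ∑ j ∈ Ioc t (3*t), ((8*t+1) + (-1)*j) ≤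
      ∑ j ∈ Ioc t (3*t), ((row t j).card : ℤ) := by
    apply Finset.sum_le_sum
    intro j hj
    rw [mem_Ioc] at hj
    rw [card_row]
    simp only [hi, lo]
    split_ifs <;> omega
  have hU2 : ∑ j ∈ Ioc (3*t) (4*t), ((14*t+1) + (-3)*j) ≤
      ∑ j ∈ Ioc (3*t) (4*t), ((row t j).card : ℤ) := by
    apply Finset.sum_le_sum
    intro j hj
    rw [mem_Ioc] at hj
    rw [card_row]
    simp only [hi, lo]
    split_ifs <;> omega
  have eL2 := sum_Ioc_linear (14*t+1) 3 (-(4*t)-1) (-(3*t)-1) (by omega)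
  have eL1 := sum_Ioc_linear (8*t+1) 1 (-(3*t)-1) (-t-1) (by omega)
  have eM := sum_Ioc_linear (7*t) 0 (-t-1) t (by omega)
  have eU1 := sum_Ioc_linear (8*t+1) (-1) t (3*t) (by omega)
  have eU2 := sum_Ioc_linear (14*t+1) (-3) (3*t) (4*t) (by omega)
  nlinarith [hL2, hL1, hM, hU1, hU2, eL2, eL1, eM, eU1, eU2]

/-! ## Quadratic form bound -/

theorem quad_core (t a b : ℤ) (h1 : t ≤ a) (h2 : t ≤ b) (h3 : a + b ≤ 4*t) :
    a^2 + a*b + b^2 ≤ 13*t^2 := by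
  nlinarith [mul_nonneg (by omega : (0:ℤ) ≤ a - t) (by omega : (0:ℤ) ≤ b - t),
    mul_nonneg (by omega : (0:ℤ) ≤ 4*t - a - b) (by omega : (0:ℤ) ≤ a + b - 2*t)]

theorem quad_strip (t u w : ℤ) (h1 : -(7*t) ≤ u) (h2 : u ≤ 7*t) (h3 : -t ≤ w) (h4 : w ≤ t) :
    u^2 + 3*w^2 ≤ 52*t^2 := by
  nlinarith [mul_nonneg (by omega : (0:ℤ) ≤ 7*t - u) (by omega : (0:ℤ) ≤ u + 7*t),
    mul_nonneg (by omega : (0:ℤ) ≤ t - w) (by omega : (0:ℤ) ≤ w + t)]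

theorem quad_bound (t i j : ℤ) (ht : 1 ≤ t)
    (h1 : -(4*t) ≤ i) (h2 : i ≤ 4*t)
    (h3 : -(4*t) ≤ j) (h4 : j ≤ 4*t)
    (h5 : -(4*t) ≤ i + j) (h6 : i + j ≤ 4*t)
    (h7 : -(7*t) ≤ 2*i + j) (h8 : 2*i + j ≤ 7*t)
    (h9 : -(7*t) ≤ i + 2*j) (h10 : i + 2*j ≤ 7*t)
    (h11 : -(7*t) ≤ i - j) (h12 : i - j ≤ 7*t) :
    i^2 + i*j + j^2 ≤ 13*t^2 := by
  rcases le_or_gt j t with hj1 | hj1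
  · rcases le_or_gt (-t) j with hj2 | hj2
    · have := quad_strip t (2*i+j) j h7 h8 hj2 hj1
      nlinarith
    · rcases le_or_gt i t with hi1 | hi1
      · rcases le_or_gt (-t) i with hi2 | hi2
        · have := quad_strip t (i+2*j) i h9 h10 hi2 hi1
          nlinarith
        · have := quad_core t (-i) (-j) (by omega) (by omega) (by omega)
          nlinarith
      · rcases le_or_gt (i+j) t with hs1 | hs1
        · rcases le_or_gt (-t) (i+j) with hs2 | hs2
          · have := quad_strip t (i-j) (i+j) h11 h12 hs2 hs1
            nlinarith
          · have := quad_core t (-(i+j)) i (by omega) (by omega) (by omega)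
            nlinarith
        · have := quad_core t (i+j) (-j) (by omega) (by omega) (by omega)
          nlinarith
  · rcases le_or_gt i (-t) with hi1 | hi1
    · rcases le_or_gt (i+j) t with hs1 | hs1
      · rcases le_or_gt (-t) (i+j) with hs2 | hs2
        · have := quad_strip t (i-j) (i+j) h11 h12 hs2 hs1
          nlinarith
        · have := quad_core t (-(i+j)) j (by omega) (by omega) (by omega)
          nlinarith
      · have := quad_core t (i+j) (-i) (by omega) (by omega) (by omega)
        nlinarith
    · rcases le_or_gt i t with hi2 | hi2
      · have := quad_strip t (i+2*j) i h9 h10 (by omega) hi2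
        nlinarith
      · have := quad_core t i j (by omega) (by omega) h6
        nlinarith

theorem T_constraints {t i j : ℤ} (ht : 1 ≤ t)
    (hj1 : -(4*t) ≤ j) (hj2 : j ≤ 4*t) (hl : lo t j ≤ i) (hr : i ≤ hi t j) :
    i^2 + i*j + j^2 ≤ 13*t^2 := by
  have h12 : -(4*t) ≤ i ∧ i ≤ 4*t ∧ -(4*t) ≤ i + j ∧ i + j ≤ 4*t ∧
      -(7*t) ≤ 2*i + j ∧ 2*i + j ≤ 7*t ∧ -(7*t) ≤ i + 2*j ∧ i + 2*j ≤ 7*t ∧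
      -(7*t) ≤ i - j ∧ i - j ≤ 7*t := by
    simp only [lo, hi] at hl hr
    split_ifs at hl hr <;> omega
  obtain ⟨a1, a2, a3, a4, a5, a6, a7, a8, a9, a10⟩ := h12
  exact quad_bound t i j ht a1 a2 hj1 hj2 a3 a4 a5 a6 a7 a8 a9 a10

/-! ## Geometry -/

noncomputable def P (p : ℤ × ℤ) : EuclideanSpace ℝ (Fin 2) :=
  (WithLp.equiv 2 (Fin 2 → ℝ)).symm ![(p.1:ℝ) + (p.2:ℝ)/2, (p.2:ℝ) * (Real.sqrt 3 / 2)]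

theorem P_apply0 (p : ℤ × ℤ) : P p 0 = (p.1:ℝ) + (p.2:ℝ)/2 := by simp [P]
theorem P_apply1 (p : ℤ × ℤ) : P p 1 = (p.2:ℝ) * (Real.sqrt 3 / 2) := by simp [P]

theorem P_inj : Function.Injective P := by
  intro p q h
  have h0 : P p 0 = P q 0 := by rw [h]
  have h1 : P p 1 = P q 1 := by rw [h]
  rw [P_apply0, P_apply0] at h0
  rw [P_apply1, P_apply1] at h1
  have hs : (Real.sqrt 3 / 2 : ℝ) ≠ 0 := by positivity
  have hj : (p.2:ℝ) = q.2 := mul_right_cancel₀ hs h1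
  have e2 : p.2 = q.2 := by exact_mod_cast hj
  have e1 : p.1 = q.1 := by
    have : (p.1:ℝ) = q.1 := by rw [hj] at h0; linarith
    exact_mod_cast this
  exact Prod.ext e1 e2

theorem dist_P (p q : ℤ × ℤ) :
    dist (P p) (P q) = Real.sqrt ((((p.1 - q.1 : ℤ)) : ℝ)^2 +
      ((p.1 - q.1 : ℤ):ℝ) * ((p.2 - q.2 : ℤ):ℝ) + (((p.2 - q.2 : ℤ)):ℝ)^2) := by
  rw [EuclideanSpace.dist_eq]
  congr 1
  rw [Fin.sum_univ_two, Real.dist_eq, Real.dist_eq, sq_abs, sq_abs,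
    P_apply0, P_apply0, P_apply1, P_apply1]
  have h3 : Real.sqrt 3 ^ 2 = 3 := Real.sq_sqrt (by norm_num)
  push_cast
  linear_combination (((p.2:ℝ) - (q.2:ℝ))^2/4) * h3

theorem norm_P (p : ℤ × ℤ) :
    ‖P p‖ = Real.sqrt (((p.1:ℝ))^2 + (p.1:ℝ) * (p.2:ℝ) + ((p.2:ℝ))^2) := by
  rw [EuclideanSpace.norm_eq]
  congr 1
  rw [Fin.sum_univ_two, P_apply0, P_apply1, Real.norm_eq_abs, Real.norm_eq_abs, sq_abs, sq_abs]
  have h3 : Real.sqrt 3 ^ 2 = 3 := Real.sq_sqrt (by norm_num)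
  linear_combination ((p.2:ℝ)^2/4) * h3

theorem form_ge_one (a b : ℤ) (h : ¬(a = 0 ∧ b = 0)) : 1 ≤ a^2 + a*b + b^2 := by
  have key : 4 ≤ (2*a+b)^2 + 3*b^2 := by
    rcases eq_or_ne b 0 with rfl | hb
    · have ha : a ≠ 0 := by tauto
      have : 1 ≤ a^2 := by
        rcases lt_or_gt_of_ne ha with h' | h' <;> nlinarith
      nlinarith
    · have hb2 : 1 ≤ b^2 := by
        rcases lt_or_gt_of_ne hb with h' | h' <;> nlinarith
      rcases eq_or_ne (2*a+b) 0 with hz | hz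
      · rcases (by omega : b ≤ -2 ∨ 2 ≤ b) with h' | h' <;> nlinarith
      · have : 1 ≤ (2*a+b)^2 := by
          rcases lt_or_gt_of_ne hz with h' | h' <;> nlinarith
        nlinarith
  nlinarith

theorem dist_P_ge_one {p q : ℤ × ℤ} (h : p ≠ q) : 1 ≤ dist (P p) (P q) := by
  rw [dist_P]
  rw [show (1:ℝ) = Real.sqrt 1 from (Real.sqrt_one).symm]
  apply Real.sqrt_le_sqrt
  have hne : ¬(p.1 - q.1 = 0 ∧ p.2 - q.2 = 0) := by
    rintro ⟨h1, h2⟩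
    exact h (Prod.ext (by omega) (by omega))
  have := form_ge_one (p.1 - q.1) (p.2 - q.2) hne
  exact_mod_cast this

theorem norm_P_le {t : ℤ} (ht : 1 ≤ t) {p : ℤ × ℤ} (hp : p ∈ T t) :
    ‖P p‖ ≤ Real.sqrt 13 * t := by
  rw [norm_P]
  obtain ⟨h1, h2, h3, h4⟩ := mem_T.mp hp
  have hq := T_constraints ht h1 h2 h3 h4
  have : ((p.1:ℝ))^2 + (p.1:ℝ) * (p.2:ℝ) + ((p.2:ℝ))^2 ≤ 13 * (t:ℝ)^2 := by
    exact_mod_cast hq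
  calc Real.sqrt (((p.1:ℝ))^2 + (p.1:ℝ) * (p.2:ℝ) + ((p.2:ℝ))^2)
      ≤ Real.sqrt (13 * (t:ℝ)^2) := Real.sqrt_le_sqrt this
    _ = Real.sqrt 13 * t := by
        rw [Real.sqrt_mul (by norm_num), Real.sqrt_sq (by exact_mod_cast (by omega : (0:ℤ) ≤ t) : (0:ℝ) ≤ (t:ℝ))]

end CurvedHexAux

open CurvedHexAux

theorem curved_hex_not_optimal_large_k :
    ∃ K : ℕ, ∀ k : ℕ, K ≤ k →
      ∃ (S : Finset (EuclideanSpace ℝ (Fin 2))) (r : ℝ),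
        S.card = 3 * k * (k + 1) + 1 ∧
        (∀ p ∈ S, ∀ q ∈ S, p ≠ q → 1 ≤ dist p q) ∧
        (∃ c : EuclideanSpace ℝ (Fin 2), ∀ p ∈ S, dist p c ≤ r) ∧
        r < 1 / (2 * Real.sin (Real.pi / (6 * k))) := by
  use 1000
  intro k hk
  classical
  -- choose t
  set t : ℤ := (13 * (k:ℤ) + 63) / 50 with ht_def
  have ht_lb : 13 * (k:ℤ) + 14 ≤ 50 * t := by omega
  have ht_ub : 50 * t ≤ 13 * (k:ℤ) + 63 := by omega
  have hk' : (1000 : ℤ) ≤ (k:ℤ) := by exact_mod_cast hk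
  have ht1 : 1 ≤ t := by omega
  -- enough points
  have hcount : (3 * (k:ℤ) * ((k:ℤ) + 1) + 1) ≤ ((T t).card : ℤ) := by
    have h1 := card_T_ge t ht1
    nlinarith [mul_nonneg (by omega : (0:ℤ) ≤ 50*t - 13*(k:ℤ) - 14)
      (by omega : (0:ℤ) ≤ 50*t - 13*(k:ℤ) - 14),
      mul_nonneg (by omega : (0:ℤ) ≤ 50*t - 13*(k:ℤ) - 14) (by omega : (0:ℤ) ≤ (k:ℤ))]
  have hcount' : 3 * k * (k + 1) + 1 ≤ ((T t).image P).card := by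
    rw [Finset.card_image_of_injective _ P_inj]
    have : ((3 * k * (k+1) + 1 : ℕ) : ℤ) ≤ ((T t).card : ℤ) := by push_cast; linarith [hcount]
    exact_mod_cast this
  obtain ⟨S, hS_sub, hS_card⟩ := Finset.exists_subset_card_eq hcount'
  refine ⟨S, Real.sqrt 13 * t, hS_card, ?_, ?_, ?_⟩
  · -- pairwise distances
    intro p hp q hq hpq
    obtain ⟨ip, hip, rfl⟩ := Finset.mem_image.mp (hS_sub hp)
    obtain ⟨iq, hiq, rfl⟩ := Finset.mem_image.mp (hS_sub hq)
    exact dist_P_ge_one (fun h => hpq (by rw [h]))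
  · -- ball
    refine ⟨0, fun p hp => ?_⟩
    obtain ⟨ip, hip, rfl⟩ := Finset.mem_image.mp (hS_sub hp)
    rw [dist_zero_right]
    exact norm_P_le ht1 hip
  · -- radius comparison
    have hkpos : (0:ℝ) < (k:ℝ) := by positivity
    have hx_pos : 0 < Real.pi / (6 * (k:ℝ)) := by positivity
    have hkr : (1000:ℝ) ≤ (k:ℝ) := by exact_mod_cast hk
    have hx_lt_pi : Real.pi / (6 * (k:ℝ)) < Real.pi :=
      div_lt_self Real.pi_pos (by linarith)
    have hsin_pos : 0 < Real.sin (Real.pi / (6 * (k:ℝ))) :=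
      Real.sin_pos_of_pos_of_lt_pi hx_pos hx_lt_pi
    have hsin_lt : Real.sin (Real.pi / (6 * (k:ℝ))) < Real.pi / (6 * (k:ℝ)) :=
      Real.sin_lt hx_pos
    have step1 : 1 / (2 * (Real.pi / (6 * (k:ℝ)))) < 1 / (2 * Real.sin (Real.pi / (6 * (k:ℝ)))) := by
      apply one_div_lt_one_div_of_lt
      · positivity
      · linarith
    have step2 : 1 / (2 * (Real.pi / (6 * (k:ℝ)))) = 3 * (k:ℝ) / Real.pi := by
      field_simp
      ring
    have hsqrt13 : Real.sqrt 13 ≤ 3.606 := by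
      rw [show (3.606:ℝ) = Real.sqrt (3.606^2) from (Real.sqrt_sq (by norm_num)).symm]
      exact Real.sqrt_le_sqrt (by norm_num)
    have ht_real : (t:ℝ) ≤ (13 * (k:ℝ) + 63) / 50 := by
      have : ((50 * t : ℤ):ℝ) ≤ ((13 * (k:ℤ) + 63 : ℤ):ℝ) := by exact_mod_cast ht_ub
      push_cast at this
      linarith
    have hpi : Real.pi < 3.141593 := Real.pi_lt_d6
    have ht_pos : (0:ℝ) < (t:ℝ) := by exact_mod_cast ht1
    have main : Real.sqrt 13 * (t:ℝ) < 3 * (k:ℝ) / Real.pi := by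
      have h1 : Real.sqrt 13 * (t:ℝ) ≤ 3.606 * ((13 * (k:ℝ) + 63) / 50) := by
        apply mul_le_mul hsqrt13 ht_real ht_pos.le (by norm_num)
      have h2 : 3 * (k:ℝ) / 3.141593 ≤ 3 * (k:ℝ) / Real.pi := by
        apply div_le_div_of_nonneg_left (by positivity) Real.pi_pos hpi.le
      have h3 : 3.606 * ((13 * (k:ℝ) + 63) / 50) < 3 * (k:ℝ) / 3.141593 := by
        rw [show (3.606:ℝ) * ((13 * (k:ℝ) + 63) / 50) = (3.606 * (13 * (k:ℝ) + 63)) / 50 by ring,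
          div_lt_div_iff₀ (by norm_num) (by norm_num)]
        nlinarith
      linarith
    calc Real.sqrt 13 * (t:ℝ) < 3 * (k:ℝ) / Real.pi := main
      _ = 1 / (2 * (Real.pi / (6 * (k:ℝ)))) := step2.symm
      _ < 1 / (2 * Real.sin (Real.pi / (6 * (k:ℝ)))) := step1
end

section
/- For every ε > 0 there exist a natural number n, a real r > 0, and a set S of n points in the plane contained in the closed ball of radius r about the origin, with pairwise distances at least 1, such that n/(2r+1)² ≥ π/(2√3) − ε. That is, as n increases, hexagonal configurations of n congruent disks that fit inside a circle achieve densities arbitrarily close to π/(2√3). -/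
open Real Metric MeasureTheory Pointwise ENNReal

noncomputable def hexPt (p : ℤ × ℤ) : EuclideanSpace ℝ (Fin 2) :=
  (WithLp.equiv 2 (Fin 2 → ℝ)).symm ![(p.1 : ℝ) + (p.2 : ℝ) / 2, (p.2 : ℝ) * (Real.sqrt 3 / 2)]

lemma dist_E2 (p q : EuclideanSpace ℝ (Fin 2)) :
    dist p q = Real.sqrt ((p 0 - q 0) ^ 2 + (p 1 - q 1) ^ 2) := by
  rw [EuclideanSpace.dist_eq]
  simp [Fin.sum_univ_two, Real.dist_eq, sq_abs]

lemma int_form_ge (a b : ℤ) (h : ¬(a = 0 ∧ b = 0)) : 1 ≤ a ^ 2 + a * b + b ^ 2 := by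
  rcases eq_or_ne b 0 with hb | hb
  · subst hb
    have ha : a ≠ 0 := by tauto
    rcases lt_or_gt_of_ne ha with h1 | h1 <;> nlinarith
  · rcases lt_or_gt_of_ne hb with h1 | h1 <;> nlinarith [sq_nonneg (2 * a + b)]

lemma hexPt_dist (p q : ℤ × ℤ) (h : p ≠ q) : 1 ≤ dist (hexPt p) (hexPt q) := by
  have h3 : Real.sqrt 3 ^ 2 = 3 := Real.sq_sqrt (by norm_num)
  rw [dist_E2]
  have e0 : hexPt p 0 - hexPt q 0 = ((p.1 - q.1 : ℤ) : ℝ) + ((p.2 - q.2 : ℤ) : ℝ) / 2 := by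
    simp [hexPt]; ring
  have e1 : hexPt p 1 - hexPt q 1 = ((p.2 - q.2 : ℤ) : ℝ) * (Real.sqrt 3 / 2) := by
    simp [hexPt]; ring
  set A : ℤ := p.1 - q.1
  set B : ℤ := p.2 - q.2
  have hAB : ¬(A = 0 ∧ B = 0) := by
    rintro ⟨h1, h2⟩
    apply h
    have : p.1 = q.1 := by omega
    have : p.2 = q.2 := by omega
    exact Prod.ext (by omega) (by omega)
  have hint := int_form_ge A B hAB
  have hr : ((A : ℝ) + (B : ℝ) / 2) ^ 2 + ((B : ℝ) * (Real.sqrt 3 / 2)) ^ 2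
      = ((A ^ 2 + A * B + B ^ 2 : ℤ) : ℝ) := by
    push_cast
    nlinarith [h3]
  rw [e0, e1, hr]
  have h1 : (1 : ℝ) ≤ ((A ^ 2 + A * B + B ^ 2 : ℤ) : ℝ) := by exact_mod_cast hint
  calc (1 : ℝ) = Real.sqrt 1 := by simp
    _ ≤ _ := Real.sqrt_le_sqrt h1

lemma det_toEuclideanLin (M : Matrix (Fin 2) (Fin 2) ℝ) :
    LinearMap.det (Matrix.toEuclideanLin M : EuclideanSpace ℝ (Fin 2) →ₗ[ℝ] EuclideanSpace ℝ (Fin 2))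
      = M.det := by
  have h : (Matrix.toEuclideanLin M : EuclideanSpace ℝ (Fin 2) →ₗ[ℝ] EuclideanSpace ℝ (Fin 2)) =
      (((WithLp.linearEquiv 2 ℝ (Fin 2 → ℝ)).symm :
          (Fin 2 → ℝ) ≃ₗ[ℝ] EuclideanSpace ℝ (Fin 2)) :
        (Fin 2 → ℝ) →ₗ[ℝ] EuclideanSpace ℝ (Fin 2)) ∘ₗ Matrix.toLin' M ∘ₗ
      ((((WithLp.linearEquiv 2 ℝ (Fin 2 → ℝ)).symm :
          (Fin 2 → ℝ) ≃ₗ[ℝ] EuclideanSpace ℝ (Fin 2))).symm :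
        EuclideanSpace ℝ (Fin 2) →ₗ[ℝ] (Fin 2 → ℝ)) := rfl
  rw [h, LinearMap.det_conj, LinearMap.det_toLin']

lemma volume_unit_square :
    volume {x : EuclideanSpace ℝ (Fin 2) | x 0 ∈ Set.Ico (0:ℝ) 1 ∧ x 1 ∈ Set.Ico (0:ℝ) 1} = 1 := by
  have h := (EuclideanSpace.volume_preserving_symm_measurableEquiv_toLp (Fin 2)).measure_preimage
    (s := Set.univ.pi fun _ => Set.Ico (0:ℝ) 1)
    ((MeasurableSet.univ_pi fun _ => measurableSet_Ico).nullMeasurableSet)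
  have heq : (MeasurableEquiv.toLp 2 (Fin 2 → ℝ)).symm ⁻¹' (Set.univ.pi fun _ => Set.Ico (0:ℝ) 1) =
      {x : EuclideanSpace ℝ (Fin 2) | x 0 ∈ Set.Ico (0:ℝ) 1 ∧ x 1 ∈ Set.Ico (0:ℝ) 1} := by
    ext x
    simp [Set.mem_pi, Fin.forall_fin_two]
  rw [heq] at h
  rw [h, volume_pi_pi]
  simp

set_option maxHeartbeats 2000000 in
theorem hexagonal_density_approx (ε : ℝ) (hε : 0 < ε) :
    ∃ (n : ℕ) (r : ℝ) (S : Finset (EuclideanSpace ℝ (Fin 2))),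
      0 < r ∧
      S.card = n ∧
      (∀ p ∈ S, dist p (0 : EuclideanSpace ℝ (Fin 2)) ≤ r) ∧
      (∀ p ∈ S, ∀ q ∈ S, p ≠ q → 1 ≤ dist p q) ∧
      Real.pi / (2 * Real.sqrt 3) - ε ≤ (n : ℝ) / (2 * r + 1) ^ 2 := by
  classical
  set s : ℝ := Real.sqrt 3 with hsdef
  have hs3 : s ^ 2 = 3 := Real.sq_sqrt (by norm_num)
  have hs17 : 1.7 ≤ s := by
    rw [hsdef]
    rw [show (1.7 : ℝ) = Real.sqrt (1.7 ^ 2) by rw [Real.sqrt_sq]; norm_num]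
    apply Real.sqrt_le_sqrt; norm_num
  have hs2 : s ≤ 2 := by
    rw [hsdef, show (2 : ℝ) = Real.sqrt 4 by rw [show (4:ℝ) = 2^2 by norm_num, Real.sqrt_sq]; norm_num]
    exact Real.sqrt_le_sqrt (by norm_num)
  have hs0 : 0 < s := by linarith
  set r : ℝ := max 4 (5 / ε) with hrdef
  have hr4 : 4 ≤ r := le_max_left _ _
  have hr0 : 0 < r := by linarith
  have hrε : 10 ≤ ε * (2 * r + 1) := by
    have h5 : 5 / ε ≤ r := le_max_right _ _
    have : 5 ≤ ε * r := by
      rw [div_le_iff₀ hε] at h5; linarith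
    nlinarith
  -- the index box and the point set
  set M : ℤ := ⌈2 * r⌉ + 1 with hMdef
  have hM2r : 2 * r ≤ (M : ℝ) := by
    rw [hMdef]
    push_cast
    linarith [Int.le_ceil (2 * r)]
  set box : Finset (ℤ × ℤ) := Finset.Icc (-M) M ×ˢ Finset.Icc (-M) M with hbox
  set Sidx : Finset (ℤ × ℤ) := box.filter (fun p => dist (hexPt p) 0 ≤ r) with hSidx
  set S : Finset (EuclideanSpace ℝ (Fin 2)) := Sidx.image hexPt with hS
  refine ⟨S.card, r, S, hr0, rfl, ?_, ?_, ?_⟩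
  · intro p hp
    rw [hS, Finset.mem_image] at hp
    obtain ⟨i, hi, rfl⟩ := hp
    exact (Finset.mem_filter.mp hi).2
  · intro p hp q hq hpq
    rw [hS, Finset.mem_image] at hp hq
    obtain ⟨i, _, rfl⟩ := hp
    obtain ⟨j, _, rfl⟩ := hq
    exact hexPt_dist i j (fun h => hpq (by rw [h]))
  -- the density estimate
  · set Q : Set (EuclideanSpace ℝ (Fin 2)) :=
      {x | x 0 ∈ Set.Ico (0:ℝ) 1 ∧ x 1 ∈ Set.Ico (0:ℝ) 1} with hQ
    set T := Matrix.toEuclideanLin !![(1:ℝ), 1/2; 0, s/2] with hT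
    set C : Set (EuclideanSpace ℝ (Fin 2)) := T '' Q with hC
    have hdetT : LinearMap.det (T : EuclideanSpace ℝ (Fin 2) →ₗ[ℝ] EuclideanSpace ℝ (Fin 2)) = s/2 := by
      rw [hT, det_toEuclideanLin, Matrix.det_fin_two_of]
      ring
    have hvolC : volume C = ENNReal.ofReal (s / 2) := by
      rw [hC, Measure.addHaar_image_linearMap, hdetT, volume_unit_square, mul_one,
        abs_of_pos (by linarith)]
    -- coordinates of T applied to a point
    have hTcoord : ∀ u v : ℝ,
        T ((WithLp.equiv 2 (Fin 2 → ℝ)).symm ![u, v]) =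
          (WithLp.equiv 2 (Fin 2 → ℝ)).symm ![u + v / 2, v * (s / 2)] := by
      intro u v
      rw [hT]
      apply (WithLp.equiv 2 (Fin 2 → ℝ)).injective
      ext i
      fin_cases i <;>
        simp [Matrix.toEuclideanLin_apply, Matrix.mulVec, dotProduct,
          Fin.sum_univ_two] <;> ring
    clear_value s r M box Sidx S Q T C
    -- the covering claim
    have cover : closedBall (0 : EuclideanSpace ℝ (Fin 2)) (r - s) ⊆ ⋃ p ∈ S, p +ᵥ C := by
      intro x hx
      rw [mem_closedBall] at hx
      have h1 : dist x (0 : EuclideanSpace ℝ (Fin 2)) =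
          Real.sqrt ((x 0) ^ 2 + (x 1) ^ 2) := by
        rw [dist_E2]; norm_num
      set X := x 0 with hX
      set Y := x 1 with hY
      have hXr : |X| ≤ r - s := by
        have h2 : |X| ≤ dist x 0 := by
          rw [h1, ← Real.sqrt_sq_eq_abs]
          exact Real.sqrt_le_sqrt (by nlinarith [sq_nonneg Y])
        linarith
      have hYr : |Y| ≤ r - s := by
        have h2 : |Y| ≤ dist x 0 := by
          rw [h1, ← Real.sqrt_sq_eq_abs]
          exact Real.sqrt_le_sqrt (by nlinarith [sq_nonneg X])
        linarith
      set v' : ℝ := 2 * Y / s with hv'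
      set u' : ℝ := X - Y / s with hu'
      set b : ℤ := ⌊v'⌋ with hb
      set a : ℤ := ⌊u'⌋ with ha
      set v : ℝ := v' - b with hv
      set u : ℝ := u' - a with hu
      have hv01 : 0 ≤ v ∧ v < 1 := ⟨by rw [hv]; linarith [Int.floor_le v'],
        by rw [hv]; linarith [Int.lt_floor_add_one v']⟩
      have hu01 : 0 ≤ u ∧ u < 1 := ⟨by rw [hu]; linarith [Int.floor_le u'],
        by rw [hu]; linarith [Int.lt_floor_add_one u']⟩
      have hYabs : |Y / s| ≤ |Y| := by
        rw [abs_div, abs_of_pos hs0]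
        apply div_le_self (abs_nonneg _) (by linarith)
      -- x = hexPt (a,b) + T (u,v)
      have hxeq : x = hexPt (a, b) + T ((WithLp.equiv 2 (Fin 2 → ℝ)).symm ![u, v]) := by
        rw [hTcoord]
        apply (WithLp.equiv 2 (Fin 2 → ℝ)).injective
        ext i
        fin_cases i
        · show X = ((a : ℝ) + (b : ℝ) / 2) + (u + v / 2)
          rw [hu, hv, hu', hv']
          field_simp
          ring
        · show Y = ((b : ℝ) * (Real.sqrt 3 / 2)) + (v * (s / 2))
          rw [hv, hv', ← hsdef]
          field_simp
          ring
      clear_value a b u v u' v'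
      have hcellnorm : dist x (hexPt (a, b)) ≤ s := by
        rw [dist_E2]
        have hw0 : (T ((WithLp.equiv 2 (Fin 2 → ℝ)).symm ![u, v])) 0 = u + v / 2 := by
          rw [hTcoord]; rfl
        have hw1 : (T ((WithLp.equiv 2 (Fin 2 → ℝ)).symm ![u, v])) 1 = v * (s / 2) := by
          rw [hTcoord]; rfl
        have e0 : x 0 - hexPt (a, b) 0 = u + v / 2 := by
          rw [hxeq, PiLp.add_apply, hw0]; ring
        have e1 : x 1 - hexPt (a, b) 1 = v * (s / 2) := by
          rw [hxeq, PiLp.add_apply, hw1]; ring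
        rw [e0, e1]
        have harg : (u + v / 2) ^ 2 + (v * (s / 2)) ^ 2 ≤ 3 := by
          have hv1 : v ^ 2 ≤ 1 := by nlinarith [hv01.1, hv01.2]
          have t1 : (u + v / 2) ^ 2 ≤ 9 / 4 := by
            nlinarith [hu01.1, hu01.2, hv01.1, hv01.2]
          have t2 : (v * (s / 2)) ^ 2 ≤ 3 / 4 := by
            have e : (v * (s / 2)) ^ 2 = v ^ 2 * s ^ 2 / 4 := by ring
            rw [e, hs3]; linarith
          linarith
        calc Real.sqrt ((u + v / 2) ^ 2 + (v * (s / 2)) ^ 2) ≤ Real.sqrt 3 :=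
              Real.sqrt_le_sqrt harg
          _ = s := hsdef.symm
      -- hexPt (a,b) belongs to S
      have hmem : hexPt (a, b) ∈ S := by
        rw [hS, Finset.mem_image]
        refine ⟨(a, b), ?_, rfl⟩
        rw [hSidx, Finset.mem_filter]
        constructor
        · rw [hbox, Finset.mem_product, Finset.mem_Icc, Finset.mem_Icc]
          have hv'bd : |v'| ≤ 2 * r := by
            rw [hv', abs_div, abs_of_pos hs0]
            rw [div_le_iff₀ hs0]
            have : |2 * Y| ≤ 2 * (r - s) := by rw [abs_mul]; simp; linarith [hYr, abs_nonneg Y]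
            nlinarith [abs_nonneg Y]
          have hu'bd : |u'| ≤ 2 * r := by
            rw [hu']
            calc |X - Y / s| ≤ |X| + |Y / s| := abs_sub _ _
              _ ≤ (r - s) + (r - s) := by
                  have := hYabs.trans hYr
                  linarith
              _ ≤ 2 * r := by linarith
          rw [abs_le] at hv'bd hu'bd
          rw [ha, hb]
          constructor
          · constructor
            · rw [Int.le_floor]; push_cast; linarith
            · have h : ⌊u'⌋ ≤ ⌊(M : ℝ)⌋ := Int.floor_le_floor (by linarith)
              simpa using h
          · constructor
            · rw [Int.le_floor]; push_cast; linarith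
            · have h : ⌊v'⌋ ≤ ⌊(M : ℝ)⌋ := Int.floor_le_floor (by linarith)
              simpa using h
        · calc dist (hexPt (a, b)) 0 ≤ dist (hexPt (a, b)) x + dist x 0 := dist_triangle _ _ _
            _ ≤ s + (r - s) := by
                rw [dist_comm]
                exact add_le_add hcellnorm hx
            _ = r := by ring
      rw [Set.mem_iUnion₂]
      refine ⟨hexPt (a, b), hmem, ?_⟩
      rw [Set.mem_vadd_set]
      refine ⟨T ((WithLp.equiv 2 (Fin 2 → ℝ)).symm ![u, v]), ?_, ?_⟩
      · rw [hC]
        refine ⟨_, ?_, rfl⟩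
        rw [hQ]
        constructor
        · show u ∈ Set.Ico (0:ℝ) 1
          exact ⟨hu01.1, hu01.2⟩
        · show v ∈ Set.Ico (0:ℝ) 1
          exact ⟨hv01.1, hv01.2⟩
      · rw [vadd_eq_add, ← hxeq]
    -- measure comparison
    have hrs : 0 ≤ r - s := by linarith
    have hkey : (r - s) ^ 2 * π ≤ (S.card : ℝ) * (s / 2) := by
      have h1 : volume (closedBall (0 : EuclideanSpace ℝ (Fin 2)) (r - s)) ≤
          ∑ p ∈ S, volume (p +ᵥ C) :=
        le_trans (measure_mono cover) (measure_biUnion_finset_le S _)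
      have h2 : ∑ p ∈ S, volume (p +ᵥ C) = (S.card : ℝ≥0∞) * ENNReal.ofReal (s / 2) := by
        have : ∀ p ∈ S, volume (p +ᵥ C) = ENNReal.ofReal (s / 2) := by
          intro p _
          rw [measure_vadd volume p C, hvolC]
        rw [Finset.sum_congr rfl this, Finset.sum_const, nsmul_eq_mul]
      have h3 : volume (closedBall (0 : EuclideanSpace ℝ (Fin 2)) (r - s)) =
          ENNReal.ofReal ((r - s) ^ 2 * π) := by
        rw [EuclideanSpace.volume_closedBall]
        simp only [Fintype.card_fin]
        have hg : Real.sqrt π ^ 2 / Real.Gamma ((2:ℕ) / 2 + 1) = π := by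
          rw [show ((2:ℕ):ℝ) / 2 + 1 = 2 by norm_num, Real.Gamma_two, div_one,
            Real.sq_sqrt Real.pi_pos.le]
        rw [hg, ← ENNReal.ofReal_pow hrs, ← ENNReal.ofReal_mul (by positivity)]
      rw [h3, h2] at h1
      rw [show ((S.card : ℝ≥0∞)) = ENNReal.ofReal (S.card : ℝ) by
            rw [ENNReal.ofReal_natCast],
          ← ENNReal.ofReal_mul (Nat.cast_nonneg _)] at h1
      exact (ENNReal.ofReal_le_ofReal_iff
        (mul_nonneg (Nat.cast_nonneg _) (by positivity))).mp h1
    -- final arithmetic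
    set n : ℝ := (S.card : ℝ) with hn
    have hn0 : 0 ≤ n := Nat.cast_nonneg _
    have h2r1 : (0 : ℝ) < 2 * r + 1 := by linarith
    have h2r1sq : (0 : ℝ) < (2 * r + 1) ^ 2 := by positivity
    have key2 : 2 * (r - s) ^ 2 * π / s ≤ n := by
      rw [div_le_iff₀ hs0]
      nlinarith [hkey]
    have main : (π / (2 * s) - ε) * (2 * r + 1) ^ 2 ≤ 2 * (r - s) ^ 2 * π / s := by
      have hsplit : π / (2 * s) - ε = (π / 2 - ε * s) / s := by
        field_simp
      have cπ : π ≤ 3.15 := by linarith [Real.pi_lt_d2]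
      have c4 : (1 + 2 * s) * (4 * r + 1 - 2 * s) ≤ 10 * (2 * r + 1) := by nlinarith
      have cε : 10 * (2 * r + 1) ≤ ε * (2 * r + 1) ^ 2 := by nlinarith
      have d1 : π * ((1 + 2 * s) * (4 * r + 1 - 2 * s)) ≤ 3.15 * (10 * (2 * r + 1)) :=
        mul_le_mul cπ c4 (by nlinarith) (by norm_num)
      have d2 : 1.7 * (10 * (2 * r + 1)) ≤ s * (ε * (2 * r + 1) ^ 2) :=
        mul_le_mul hs17 cε (by nlinarith) hs0.le
      have base : (π / 2 - ε * s) * (2 * r + 1) ^ 2 ≤ 2 * (r - s) ^ 2 * π := by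
        have idd : (π / 2 - ε * s) * (2 * r + 1) ^ 2 =
            2 * (r - s) ^ 2 * π + (π * ((1 + 2 * s) * (4 * r + 1 - 2 * s))) / 2
              - s * (ε * (2 * r + 1) ^ 2) := by ring
        rw [idd]
        linarith
      rw [hsplit, div_mul_eq_mul_div, div_le_div_iff₀ hs0 hs0]
      exact mul_le_mul_of_nonneg_right base hs0.le
    have final : π / (2 * s) - ε ≤ n / (2 * r + 1) ^ 2 := by
      rw [sub_le_iff_le_add, ← sub_le_iff_le_add, le_div_iff₀ h2r1sq]
      calc (π / (2 * s) - ε) * (2 * r + 1) ^ 2 ≤ 2 * (r - s) ^ 2 * π / s := main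
        _ ≤ n := key2
    exact final
end
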